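/- Regular graphs are recognizable: if G and H are reconstructions of each other with at least three vertices and G is k-regular, then H is k-regular. -/

import Mathlib

open SimpleGraph

def IsReconstruction {V W : Type*} (G : SimpleGraph V) (H : SimpleGraph W) : Prop :=
  ∃ f : V ≃ W, ∀ v : V,
    Nonempty ((G.induce {w | w ≠ v}) ≃g (H.induce {w | w ≠ f v}))

/-!
Deleting a vertex `v` removes exactly `deg v` edges, so `|E(G - v)| + deg v = |E(G)|`. Summing
over `v` gives Kelly's count `∑ᵥ |E(G - v)| = (n - 2) |E(G)|`, so for `n ≥ 3` the number of edges
is determined by the vertex-deleted subgraphs, and then so is the degree of every deleted vertex.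
-/

open Finset

namespace SimpleGraph

variable {V : Type*} [Fintype V] (G : SimpleGraph V) [DecidableRel G.Adj]

theorem card_edgeSet_induce_ne_add_degree (v : V) :
    Nat.card (G.induce {w | w ≠ v}).edgeSet + G.degree v = #G.edgeFinset := by
  classical
  rw [Nat.card_eq_fintype_card, ← edgeFinset_card]
  change #(G.induce {v}ᶜ).edgeFinset + _ = _
  rw [card_edgeFinset_induce_compl_singleton, card_edgeFinset_deleteIncidenceSet,
    Nat.sub_add_cancel (G.degree_le_card_edgeFinset v)]

theorem sum_card_edgeSet_induce_ne :
    ∑ v, Nat.card (G.induce {w | w ≠ v}).edgeSet = (Fintype.card V - 2) * #G.edgeFinset := by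
  have hsum : ∑ v, Nat.card (G.induce {w | w ≠ v}).edgeSet + 2 * #G.edgeFinset
      = Fintype.card V * #G.edgeFinset := by
    rw [← sum_degrees_eq_twice_card_edges, ← sum_add_distrib,
      sum_congr rfl fun v _ ↦ G.card_edgeSet_induce_ne_add_degree v, sum_const, card_univ,
      smul_eq_mul]
  rw [Nat.sub_mul]
  omega

end SimpleGraph

namespace IsReconstruction

variable {V W : Type*} [Fintype V] [Fintype W] {G : SimpleGraph V} {H : SimpleGraph W}
  [DecidableRel G.Adj] [DecidableRel H.Adj]

theorem card_edgeFinset_eq (hrec : IsReconstruction G H) (hcard : 3 ≤ Fintype.card V) :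
    #G.edgeFinset = #H.edgeFinset := by
  obtain ⟨f, hf⟩ := hrec
  have hdeck : ∑ v, Nat.card (G.induce {w | w ≠ v}).edgeSet
      = ∑ w, Nat.card (H.induce {w' | w' ≠ w}).edgeSet :=
    Fintype.sum_equiv f _ _ fun v ↦ Nat.card_congr (hf v).some.mapEdgeSet
  rw [G.sum_card_edgeSet_induce_ne, H.sum_card_edgeSet_induce_ne,
    ← Fintype.card_congr f] at hdeck
  exact Nat.eq_of_mul_eq_mul_left (by omega) hdeck

theorem exists_equiv_degree_eq (hrec : IsReconstruction G H) (hcard : 3 ≤ Fintype.card V) :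
    ∃ f : V ≃ W, ∀ v, G.degree v = H.degree (f v) := by
  have hedges := hrec.card_edgeFinset_eq hcard
  obtain ⟨f, hf⟩ := hrec
  refine ⟨f, fun v ↦ ?_⟩
  have hG := G.card_edgeSet_induce_ne_add_degree v
  have hH := H.card_edgeSet_induce_ne_add_degree (f v)
  rw [Nat.card_congr (hf v).some.mapEdgeSet] at hG
  omega

end IsReconstruction

/-- Regular graphs are recognizable. -/
theorem stmt_16 {V W : Type*} [Fintype V] [Fintype W]
    (G : SimpleGraph V) (H : SimpleGraph W)
    [DecidableRel G.Adj] [DecidableRel H.Adj]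
    (hrec : IsReconstruction G H) (hcard : 3 ≤ Fintype.card V)
    {k : ℕ} (hreg : G.IsRegularOfDegree k) :
    H.IsRegularOfDegree k := by
  obtain ⟨f, hf⟩ := hrec.exists_equiv_degree_eq hcard
  intro w
  rw [← f.apply_symm_apply w, ← hf, hreg]
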